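/- arXiv:1111.4669 — 6 statements merged into one kernel-verified Lean document; each statement's English description precedes it below -/
import Mathlib

section
/- Let a, b, c be non-negative integers with b ≤ a and 1 ≤ c < 2^(a−b+1). Then the binomial coefficient C(2^a, c) is divisible by 2^b. -/
/-- binary digit sum -/
def s2 (n : ℕ) : ℕ := (Nat.digits 2 n).sum

/-- 2-adic valuation -/
def nu (n : ℕ) : ℕ := padicValNat 2 n

/-! By Kummer's theorem `ν_p(C(p^a, c)) + ν_p(c) = a` for `0 < c ≤ p^a`, while `c < p^(a-b+1)`
forces `ν_p(c) ≤ a - b`. -/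

namespace Nat

theorem factorization_le_of_lt_pow_succ {p c m : ℕ} (hp : p.Prime) (hc0 : c ≠ 0)
    (hc : c < p ^ (m + 1)) : c.factorization p ≤ m := by
  have hle : p ^ c.factorization p ≤ c := Nat.le_of_dvd (Nat.pos_of_ne_zero hc0) (ordProj_dvd c p)
  exact Nat.lt_succ_iff.mp ((Nat.pow_lt_pow_iff_right hp.one_lt).mp (hle.trans_lt hc))

theorem Prime.pow_dvd_choose_prime_pow {p a b c : ℕ} (hp : p.Prime) (hba : b ≤ a) (hc0 : c ≠ 0)
    (hc : c < p ^ (a - b + 1)) : p ^ b ∣ choose (p ^ a) c := by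
  rcases b.eq_zero_or_pos with rfl | hb
  · exact (pow_zero p).symm ▸ one_dvd _
  have hca : c ≤ p ^ a := hc.le.trans (Nat.pow_le_pow_right hp.pos (by omega))
  have hkummer := factorization_choose_prime_pow_add_factorization hp hca hc0
  have hvc := factorization_le_of_lt_pow_succ hp hc0 hc
  rw [hp.pow_dvd_iff_le_factorization (choose_pos hca).ne']
  omega

end Nat

theorem stmt1 (a b c : ℕ) (hba : b ≤ a) (hc1 : 1 ≤ c) (hc2 : c < 2 ^ (a - b + 1)) :
    2 ^ b ∣ Nat.choose (2 ^ a) c :=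
  Nat.prime_two.pow_dvd_choose_prime_pow hba (by omega) hc2
end

section
/- Let μ, i, j be integers with μ > 0 and 0 ≤ j < i ≤ 2^(μ+1) − 1. Then μ + 1 ≥ ν(i − j) + ν(C(i, j)), where ν is the 2-adic valuation and C(i,j) the binomial coefficient. -/
open Finset in
/-- By Kummer's theorem the left side counts the carries in `k + (n - k)` plus the positions
`i ≥ 1` with `p ^ i ∣ k`; no carry can occur at such a position, since there `k % p ^ i = 0`. -/
theorem Nat.factorization_choose_add_factorization_le_log {p n k : ℕ} (hp : p.Prime)
    (hkn : k ≤ n) (hk0 : k ≠ 0) :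
    (n.choose k).factorization p + k.factorization p ≤ Nat.log p n := by
  have hdisj : Disjoint {i ∈ Ico 1 (log p n + 1) | p ^ i ≤ k % p ^ i + (n - k) % p ^ i}
      {i ∈ Ico 1 (log p n + 1) | p ^ i ∣ k} := by
    simp +contextual [disjoint_right, dvd_iff_mod_eq_zero, Nat.mod_lt _ (pow_pos hp.pos _)]
  have hk_lt : k < p ^ (log p n + 1) := hkn.trans_lt (lt_pow_succ_log_self hp.one_lt n)
  rw [factorization_choose hp hkn (lt_add_one _),
    factorization_eq_card_pow_dvd_of_lt hp (Nat.pos_of_ne_zero hk0) hk_lt,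
    ← card_union_of_disjoint hdisj, filter_union_right]
  exact (card_filter_le _ _).trans_eq (by simp)

theorem stmt4_general (μ i j : ℕ) (hji : j < i) (hi : i ≤ 2 ^ (μ + 1) - 1) :
    μ + 1 ≥ nu (i - j) + nu (Nat.choose i j) := by
  have hlog : Nat.log 2 i ≤ μ :=
    Nat.lt_succ_iff.mp (Nat.log_lt_of_lt_pow (by omega) (by omega))
  have key := Nat.factorization_choose_add_factorization_le_log Nat.prime_two
    (Nat.sub_le i j) (Nat.sub_ne_zero_of_lt hji)
  rw [Nat.choose_symm hji.le, Nat.factorization_def _ Nat.prime_two,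
    Nat.factorization_def _ Nat.prime_two] at key
  unfold nu
  omega

theorem stmt4 (μ i j : ℕ) (hμ : 0 < μ) (hji : j < i) (hi : i ≤ 2 ^ (μ + 1) - 1) :
    μ + 1 ≥ nu (i - j) + nu (Nat.choose i j) :=
  stmt4_general μ i j hji hi
end

section
/- Let n be a positive integer with s₂(n) ≥ 2 and ν(n) > 0 (i.e., n even), where s₂ is the binary digit-sum and ν the 2-adic valuation. Then ν(C(2n − 2^(ν(n)+1) − 1, n)) = s₂(n) − 2; in particular it is strictly less than s₂(n) − 1. -/
/-!
Write `n = 2^ν (2t + 1)`; then `s₂(n) = s₂(t) + 1`, so `t ≥ 1`, and the top entry of the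
binomial coefficient is `N = 2^(ν+2) t - 1`, with `N - n = 2^ν (2t - 1) - 1`. Subtracting one from
`2^j m` turns its `j` trailing zeros into ones, so `s₂(N) = s₂(t - 1) + ν + 2` and
`s₂(N - n) = s₂(t - 1) + ν`. Kummer's theorem `ν(C(N, n)) = s₂(n) + s₂(N - n) - s₂(N)` then gives
`s₂(t) - 1 = s₂(n) - 2`.
-/

namespace Nat

variable {b : ℕ}

theorem digits_sum_base_pow_mul (hb : 1 < b) (k m : ℕ) :
    (b.digits (b ^ k * m)).sum = (b.digits m).sum := by
  rcases m.eq_zero_or_pos with rfl | hm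
  · simp
  · simp [digits_base_pow_mul hb hm]

theorem digits_sum_base_pow_mul_sub_one (hb : 1 < b) (k : ℕ) {m : ℕ} (hm : 0 < m) :
    (b.digits (b ^ k * m - 1)).sum = (b.digits (m - 1)).sum + k * (b - 1) := by
  induction k with
  | zero => simp
  | succ k ih =>
    have hpos : 0 < b ^ k * m := by positivity
    have hsplit : b ^ (k + 1) * m - 1 = (b - 1) + b * (b ^ k * m - 1) := by
      rw [pow_succ', mul_assoc, Nat.mul_sub_one]
      have : b ≤ b * (b ^ k * m) := Nat.le_mul_of_pos_right b hpos
      omega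
    rw [hsplit, digits_add b hb _ _ (by omega) (.inl (by omega)), List.sum_cons, ih]
    ring

end Nat

theorem s2_two_pow_mul (k m : ℕ) : s2 (2 ^ k * m) = s2 m :=
  Nat.digits_sum_base_pow_mul one_lt_two k m

theorem s2_two_pow_mul_sub_one (k : ℕ) {m : ℕ} (hm : 0 < m) :
    s2 (2 ^ k * m - 1) = s2 (m - 1) + k := by
  simpa [s2] using Nat.digits_sum_base_pow_mul_sub_one one_lt_two k hm

theorem s2_two_pow_mul_odd (k t : ℕ) : s2 (2 ^ k * (2 * t + 1)) = s2 t + 1 := by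
  rw [s2_two_pow_mul, s2, add_comm, Nat.digits_add 2 one_lt_two 1 t one_lt_two (.inl one_ne_zero),
    List.sum_cons, add_comm, s2]

theorem nu_two_pow_mul_odd (k t : ℕ) : nu (2 ^ k * (2 * t + 1)) = k := by
  have hodd : ¬ 2 ∣ 2 * t + 1 := by omega
  rw [nu, padicValNat.mul (by positivity) (by omega), padicValNat.prime_pow,
    padicValNat.eq_zero_of_not_dvd hodd, add_zero]

theorem nu_choose_eq_s2 {N k : ℕ} (h : k ≤ N) : nu (N.choose k) = s2 k + s2 (N - k) - s2 N := by
  simpa [s2, nu] using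
    sub_one_mul_padicValNat_choose_eq_sub_sum_digits (p := 2) (hp := ⟨Nat.prime_two⟩) h

theorem nu_choose_two_pow_mul_odd (ν : ℕ) {t : ℕ} (ht : 0 < t) :
    nu ((2 ^ (ν + 2) * t - 1).choose (2 ^ ν * (2 * t + 1))) = s2 t - 1 := by
  have hP : 0 < 2 ^ ν := by positivity
  have hPt : 2 ^ ν ≤ 2 ^ ν * t := Nat.le_mul_of_pos_right _ ht
  have hN : 2 ^ (ν + 2) * t = 4 * (2 ^ ν * t) := by ring
  have hn : 2 ^ ν * (2 * t + 1) = 2 * (2 ^ ν * t) + 2 ^ ν := by ring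
  have hdiff : 2 ^ ν * (2 * t - 1) = 2 * (2 ^ ν * t) - 2 ^ ν := by
    rw [Nat.mul_sub, mul_one, mul_left_comm]
  have hle : 2 ^ ν * (2 * t + 1) ≤ 2 ^ (ν + 2) * t - 1 := by omega
  have hsub : 2 ^ (ν + 2) * t - 1 - 2 ^ ν * (2 * t + 1) = 2 ^ ν * (2 * t - 1) - 1 := by omega
  have hdouble : 2 * t - 1 - 1 = 2 ^ 1 * (t - 1) := by omega
  rw [nu_choose_eq_s2 hle, hsub, s2_two_pow_mul_odd, s2_two_pow_mul_sub_one _ ht,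
    s2_two_pow_mul_sub_one _ (by omega), hdouble, s2_two_pow_mul]
  omega

theorem stmt5_general (n : ℕ) (hs : 2 ≤ s2 n) :
    nu (Nat.choose (2 * n - 2 ^ (nu n + 1) - 1) n) = s2 n - 2 ∧
    nu (Nat.choose (2 * n - 2 ^ (nu n + 1) - 1) n) < s2 n - 1 := by
  have hn : n ≠ 0 := by rintro rfl; simp [s2] at hs
  obtain ⟨ν, _, ⟨t, rfl⟩, rfl⟩ := Nat.exists_eq_two_pow_mul_odd hn
  rw [s2_two_pow_mul_odd] at hs
  rw [nu_two_pow_mul_odd, s2_two_pow_mul_odd]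
  have ht : 0 < t := Nat.pos_of_ne_zero (by rintro rfl; simp [s2] at hs)
  have hN : 2 * (2 ^ ν * (2 * t + 1)) - 2 ^ (ν + 1) - 1 = 2 ^ (ν + 2) * t - 1 := by
    rw [pow_succ, pow_succ]; ring_nf; omega
  rw [hN, nu_choose_two_pow_mul_odd ν ht]
  omega

theorem stmt5 (n : ℕ) (hn : 0 < n) (hs : 2 ≤ s2 n) (hν : 0 < nu n) :
    nu (Nat.choose (2 * n - 2 ^ (nu n + 1) - 1) n) = s2 n - 2 ∧
    nu (Nat.choose (2 * n - 2 ^ (nu n + 1) - 1) n) < s2 n - 1 :=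
  stmt5_general n hs
end

section
/- Let n be a positive integer with s₂(n) ≥ 2, s₂(n+1) ≥ s₂(n), and ν(n) = 0 (n odd). Then each of the 2-adic valuations ν(C(2n+2, n+1)), ν(C(2n+1, n+1)), ν(C(2n, n+1)), ν(C(2n, n)), ν(C(2n−1, n+1)), ν(C(2n−1, n)), ν(C(2n−2, n+1)), ν(C(2n−2, n)), and ν(C(2n−2, n−1)) is at least s₂(n) − 1, while ν(C(2n−3, n)) = s₂(n) − 2. -/
lemma s2_two_mul (k : ℕ) : s2 (2 * k) = s2 k := by
  rcases Nat.eq_zero_or_pos k with rfl | hk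
  · rfl
  rw [s2, Nat.digits_def' (by norm_num) (by omega)]
  simp [s2]

lemma s2_two_mul_add_one (k : ℕ) : s2 (2 * k + 1) = s2 k + 1 := by
  rw [s2, Nat.digits_def' (by norm_num) (by omega), show (2 * k + 1) % 2 = 1 by omega,
    show (2 * k + 1) / 2 = k by omega, List.sum_cons, s2, add_comm]

lemma s2_succ_le (k : ℕ) : s2 (k + 1) ≤ s2 k + 1 := by
  induction k using Nat.strong_induction_on with
  | _ k ih =>
    obtain ⟨j, rfl | rfl⟩ := Nat.even_or_odd' k
    · rw [s2_two_mul_add_one, s2_two_mul]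
    · rw [show 2 * j + 1 + 1 = 2 * (j + 1) by ring, s2_two_mul, s2_two_mul_add_one]
      exact (ih j (by omega)).trans (by omega)

lemma s2_succ_le_of_odd {k : ℕ} (hk : Odd k) : s2 (k + 1) ≤ s2 k := by
  obtain ⟨j, rfl⟩ := hk
  rw [show 2 * j + 1 + 1 = 2 * (j + 1) by ring, s2_two_mul, s2_two_mul_add_one]
  exact s2_succ_le j

lemma s2_sub_one_add_one_of_odd {k : ℕ} (hk : Odd k) : s2 (k - 1) + 1 = s2 k := by
  obtain ⟨j, rfl⟩ := hk
  rw [Nat.add_sub_cancel, s2_two_mul, s2_two_mul_add_one]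

lemma mod_four_eq_one_of_odd_of_s2_le_s2_succ {n : ℕ} (hn : Odd n) (h : s2 n ≤ s2 (n + 1)) :
    n % 4 = 1 := by
  obtain ⟨j, rfl⟩ := hn
  rw [show 2 * j + 1 + 1 = 2 * (j + 1) by ring, s2_two_mul, s2_two_mul_add_one] at h
  obtain ⟨i, rfl | rfl⟩ := Nat.even_or_odd' j
  · omega
  · have := s2_succ_le_of_odd (odd_two_mul_add_one i)
    omega

lemma s2_le_s2_sub_three_add_one {n : ℕ} (hn : n % 4 = 1) : s2 n ≤ s2 (n - 3) + 1 := by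
  obtain ⟨j, rfl⟩ : ∃ j, n = 4 * j + 1 := ⟨n / 4, by omega⟩
  rcases j with _ | i
  · simp [s2]
  rw [show 4 * (i + 1) + 1 - 3 = 2 * (2 * i + 1) by omega,
    show 4 * (i + 1) + 1 = 2 * (2 * (i + 1)) + 1 by ring, s2_two_mul_add_one, s2_two_mul,
    s2_two_mul, s2_two_mul_add_one]
  have := s2_succ_le i
  omega

lemma nu_choose_of_add_eq (a : ℕ) {b c : ℕ} (h : a + b = c) :
    nu (c.choose b) = s2 a + s2 b - s2 c := by
  subst h
  have := sub_one_mul_padicValNat_choose_eq_sub_sum_digits' (p := 2) (k := b) (n := a)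
  simpa [nu, s2, add_comm] using this

lemma odd_of_nu_eq_zero {n : ℕ} (hn : n ≠ 0) (h : nu n = 0) : Odd n := by
  rw [nu, padicValNat.eq_zero_iff] at h
  simpa [hn, Nat.odd_iff, Nat.two_dvd_ne_zero] using h

theorem stmt8_general (n : ℕ) (hs : 2 ≤ s2 n) (hmono : s2 n ≤ s2 (n + 1))
    (hν : nu n = 0) :
    s2 n - 1 ≤ nu (Nat.choose (2 * n + 2) (n + 1)) ∧
    s2 n - 1 ≤ nu (Nat.choose (2 * n + 1) (n + 1)) ∧
    s2 n - 1 ≤ nu (Nat.choose (2 * n) (n + 1)) ∧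
    s2 n - 1 ≤ nu (Nat.choose (2 * n) n) ∧
    s2 n - 1 ≤ nu (Nat.choose (2 * n - 1) (n + 1)) ∧
    s2 n - 1 ≤ nu (Nat.choose (2 * n - 1) n) ∧
    s2 n - 1 ≤ nu (Nat.choose (2 * n - 2) (n + 1)) ∧
    s2 n - 1 ≤ nu (Nat.choose (2 * n - 2) n) ∧
    s2 n - 1 ≤ nu (Nat.choose (2 * n - 2) (n - 1)) ∧
    nu (Nat.choose (2 * n - 3) n) = s2 n - 2 := by
  have hn : 2 ≤ n := hs.trans (Nat.digit_sum_le 2 n)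
  have hodd : Odd n := odd_of_nu_eq_zero (by omega) hν
  have hn4 : n % 4 = 1 := mod_four_eq_one_of_odd_of_s2_le_s2_succ hodd hmono
  have h_succ : s2 (n + 1) = s2 n := le_antisymm (s2_succ_le_of_odd hodd) hmono
  have h_pred : s2 (n - 1) + 1 = s2 n := s2_sub_one_add_one_of_odd hodd
  have h_sub_two : s2 (n - 2) = s2 (n - 3) + 1 := by
    obtain ⟨i, hi⟩ : ∃ i, n - 3 = 2 * i := ⟨(n - 3) / 2, by omega⟩
    rw [show n - 2 = 2 * i + 1 by omega, hi, s2_two_mul_add_one, s2_two_mul]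
  have h_sub_three : s2 n ≤ s2 (n - 3) + 1 := s2_le_s2_sub_three_add_one hn4
  have h_double := s2_two_mul n
  have h_double_add_one := s2_two_mul_add_one n
  have h_double_add_two : s2 (2 * n + 2) = s2 (n + 1) := by
    rw [show 2 * n + 2 = 2 * (n + 1) by ring, s2_two_mul]
  have h_double_sub_one : s2 (2 * n - 1) = s2 (n - 1) + 1 := by
    rw [show 2 * n - 1 = 2 * (n - 1) + 1 by omega, s2_two_mul_add_one]
  have h_double_sub_two : s2 (2 * n - 2) = s2 (n - 1) := by
    rw [show 2 * n - 2 = 2 * (n - 1) by omega, s2_two_mul]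
  have h_double_sub_three : s2 (2 * n - 3) = s2 (n - 2) + 1 := by
    rw [show 2 * n - 3 = 2 * (n - 2) + 1 by omega, s2_two_mul_add_one]
  refine ⟨?_, ?_, ?_, ?_, ?_, ?_, ?_, ?_, ?_, ?_⟩
  · rw [nu_choose_of_add_eq (n + 1)] <;> omega
  · rw [nu_choose_of_add_eq n] <;> omega
  · rw [nu_choose_of_add_eq (n - 1)] <;> omega
  · rw [nu_choose_of_add_eq n] <;> omega
  · rw [nu_choose_of_add_eq (n - 2)] <;> omega
  · rw [nu_choose_of_add_eq (n - 1)] <;> omega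
  · rw [nu_choose_of_add_eq (n - 3)] <;> omega
  · rw [nu_choose_of_add_eq (n - 2)] <;> omega
  · rw [nu_choose_of_add_eq (n - 1)] <;> omega
  · rw [nu_choose_of_add_eq (n - 3)] <;> omega

theorem stmt8 (n : ℕ) (hn : 0 < n) (hs : 2 ≤ s2 n) (hmono : s2 n ≤ s2 (n + 1))
    (hν : nu n = 0) :
    s2 n - 1 ≤ nu (Nat.choose (2 * n + 2) (n + 1)) ∧
    s2 n - 1 ≤ nu (Nat.choose (2 * n + 1) (n + 1)) ∧
    s2 n - 1 ≤ nu (Nat.choose (2 * n) (n + 1)) ∧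
    s2 n - 1 ≤ nu (Nat.choose (2 * n) n) ∧
    s2 n - 1 ≤ nu (Nat.choose (2 * n - 1) (n + 1)) ∧
    s2 n - 1 ≤ nu (Nat.choose (2 * n - 1) n) ∧
    s2 n - 1 ≤ nu (Nat.choose (2 * n - 2) (n + 1)) ∧
    s2 n - 1 ≤ nu (Nat.choose (2 * n - 2) n) ∧
    s2 n - 1 ≤ nu (Nat.choose (2 * n - 2) (n - 1)) ∧
    nu (Nat.choose (2 * n - 3) n) = s2 n - 2 :=
  stmt8_general n hs hmono hν
end

section
/- For any positive integer n with s₂(n) ≥ 2, the 2-adic valuation of C(2n−2, n) equals s₂(n) − 1 + ν(n−1); in particular ν(C(2n−2, n)) ≥ s₂(n) − 1. -/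
/-!
By Kummer, `ν(C(2n-2, n)) = s₂(n) + s₂(n-2) - s₂(2n-2)`, and `s₂(2n-2) = s₂(n-1)`.
Comparing Legendre's formula for `m!` and `(m-1)!` gives `ν(m) + s₂(m) = s₂(m-1) + 1`;
at `m = n - 1` this turns the difference `s₂(n-2) - s₂(n-1)` into `ν(n-1) - 1`.
The cases `n ≤ 1` are checked directly.
-/

theorem Nat.sum_digits_base_mul {b : ℕ} (hb : 1 < b) (m : ℕ) :
    (b.digits (b * m)).sum = (b.digits m).sum := by
  rcases m.eq_zero_or_pos with rfl | hm
  · simp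
  · simp [Nat.digits_base_mul hb hm]

theorem Nat.sum_digits_pos (b : ℕ) {n : ℕ} (hn : n ≠ 0) : 0 < (b.digits n).sum :=
  List.sum_pos_iff_exists_pos_nat.mpr ⟨_, List.getLast_mem (Nat.digits_ne_nil_iff_ne_zero.mpr hn),
    Nat.pos_of_ne_zero (Nat.getLast_digit_ne_zero b hn)⟩

theorem sub_one_mul_padicValNat_add_sum_digits {p m : ℕ} [Fact p.Prime] (hm : 0 < m) :
    (p - 1) * padicValNat p m + (p.digits m).sum = (p.digits (m - 1)).sum + 1 := by
  have legendre_m := sub_one_mul_padicValNat_factorial (p := p) m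
  have legendre_pred := sub_one_mul_padicValNat_factorial (p := p) (m - 1)
  have factorial_split :
      padicValNat p m.factorial = padicValNat p m + padicValNat p (m - 1).factorial := by
    rw [← Nat.mul_factorial_pred hm.ne', padicValNat.mul hm.ne' (Nat.factorial_ne_zero _)]
  rw [factorial_split, Nat.mul_add] at legendre_m
  have := Nat.digit_sum_le p m
  have := Nat.digit_sum_le p (m - 1)
  omega

theorem stmt9_general (n : ℕ) :
    nu (Nat.choose (2 * n - 2) n) = s2 n - 1 + nu (n - 1) ∧
    s2 n - 1 ≤ nu (Nat.choose (2 * n - 2) n) := by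
  suffices h : nu (Nat.choose (2 * n - 2) n) = s2 n - 1 + nu (n - 1) from ⟨h, h ▸ le_self_add⟩
  rcases Nat.lt_or_ge n 2 with hn | hn
  · interval_cases n <;> simp [s2, nu]
  have kummer := sub_one_mul_padicValNat_choose_eq_sub_sum_digits (p := 2) (k := n)
    (n := 2 * n - 2) (by omega)
  have halve : (Nat.digits 2 (2 * n - 2)).sum = (Nat.digits 2 (n - 1)).sum := by
    rw [show 2 * n - 2 = 2 * (n - 1) by omega, Nat.sum_digits_base_mul one_lt_two]
  rw [halve, show 2 * n - 2 - n = n - 1 - 1 by omega] at kummer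
  have carry := sub_one_mul_padicValNat_add_sum_digits (p := 2) (m := n - 1) (by omega)
  simp only [Nat.add_one_sub_one, one_mul] at kummer carry
  have digit_sum_pos := Nat.sum_digits_pos 2 (n := n) (by omega)
  unfold s2 nu
  omega

theorem stmt9 (n : ℕ) (hn : 0 < n) (hs : 2 ≤ s2 n) :
    nu (Nat.choose (2 * n - 2) n) = s2 n - 1 + nu (n - 1) ∧
    s2 n - 1 ≤ nu (Nat.choose (2 * n - 2) n) :=
  stmt9_general n
end

section
/- Let d ≥ 0, e ≥ 1, and k = e + d. For any non-negative integers α, β, r, p with α + β = p ≤ d, r ≥ α, and r + β ≤ d, the 2-adic valuation of C(2^k, r − α + 1) is at least p + e. -/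
/-! By Kummer's theorem `ν C(2^k, c) = k - ν c`, and `ν c ≤ log₂ c ≤ d - p` because
`c = r - α + 1 ≤ d - p + 1`. -/

theorem padicValNat_choose_prime_pow {p n k : ℕ} [hp : Fact p.Prime] (hkn : k ≤ p ^ n)
    (hk0 : k ≠ 0) : padicValNat p (Nat.choose (p ^ n) k) = n - padicValNat p k := by
  simpa only [Nat.factorization_def _ hp.out] using
    Nat.factorization_choose_prime_pow hp.out hkn hk0

theorem le_padicValNat_choose_prime_pow {p a b c : ℕ} [hp : Fact p.Prime] (hb : b ≤ a)
    (hc0 : c ≠ 0) (hc : c < p ^ (a - b + 1)) : b ≤ padicValNat p (Nat.choose (p ^ a) c) := by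
  rcases Nat.eq_zero_or_pos b with rfl | hb0
  · exact Nat.zero_le _
  have hca : c ≤ p ^ a :=
    hc.le.trans (Nat.pow_le_pow_right hp.out.pos (by omega))
  have hvc : padicValNat p c < a - b + 1 :=
    (padicValNat_le_nat_log c).trans_lt (Nat.log_lt_of_lt_pow hc0 hc)
  rw [padicValNat_choose_prime_pow hca hc0]
  omega

theorem stmt17_general (d e k α β r p : ℕ) (hk : k = e + d)
    (hp : α + β = p) (hpd : p ≤ d) (hrb : r + β ≤ d) :
    p + e ≤ nu (Nat.choose (2 ^ k) (r - α + 1)) := by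
  have hc : r - α + 1 < 2 ^ (k - (p + e) + 1) :=
    calc r - α + 1 ≤ d - p + 1 := by omega
      _ < 2 ^ (d - p + 1) := Nat.lt_two_pow_self
      _ = 2 ^ (k - (p + e) + 1) := by congr 2; omega
  exact le_padicValNat_choose_prime_pow (by omega) (Nat.succ_ne_zero _) hc

theorem stmt17 (d e k α β r p : ℕ) (he : 1 ≤ e) (hk : k = e + d)
    (hp : α + β = p) (hpd : p ≤ d) (hr : α ≤ r) (hrb : r + β ≤ d) :
    p + e ≤ nu (Nat.choose (2 ^ k) (r - α + 1)) :=
  stmt17_general d e k α β r p hk hp hpd hrb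
end
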